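/- arXiv:1705.09950 — 2 statements merged into one kernel-verified Lean document; each statement's English description precedes it below -/
import Mathlib

section
/- Three points Γᵢ, Γⱼ, Γₖ on the unit 2-sphere lie on a common great circle of S² if and only if one of the following holds for their pairwise geodesic distances: θᵢⱼ = |θᵢₖ − θⱼₖ|, or θᵢⱼ = θᵢₖ + θⱼₖ, or θᵢⱼ + θᵢₖ + θⱼₖ = 2π. -/
/-!
Three unit vectors lie on a great circle iff they are linearly dependent, i.e. iff the Gram
determinant `1 + 2abc - a² - b² - c²` of their pairwise cosines `a, b, c` vanishes. Writing
`b = cos β`, `c = cos γ` with `β, γ ∈ [0, π]`, this determinant factors as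
`-(a - cos (β - γ)) * (a - cos (β + γ))`, and inverting `cos` on `[0, π]` turns the two factors
into the three relations between the angles.
-/

open Matrix Real

noncomputable section

/-- The hat (cross-product) matrix of `k`, satisfying `hat k *ᵥ y = k ×₃ y`. -/
def hat (k : Fin 3 → ℝ) : Matrix (Fin 3) (Fin 3) ℝ :=
  !![0, -k 2, k 1; k 2, 0, -k 0; -k 1, k 0, 0]

/-- Membership in the unit 2-sphere. -/
def S2 (x : Fin 3 → ℝ) : Prop := x ⬝ᵥ x = 1

/-- Geodesic distance on the unit sphere. -/
def geo (x y : Fin 3 → ℝ) : ℝ := Real.arccos (x ⬝ᵥ y)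

open Set

def unitGramDet (a b c : ℝ) : ℝ := 1 + 2 * a * b * c - a ^ 2 - b ^ 2 - c ^ 2

lemma eq_cos_iff_arccos_eq {a t : ℝ} (ha : a ∈ Icc (-1) 1) (ht : t ∈ Icc 0 π) :
    a = cos t ↔ arccos a = t :=
  ⟨fun h ↦ h ▸ arccos_cos ht.1 ht.2, fun h ↦ h ▸ (cos_arccos ha.1 ha.2).symm⟩

lemma eq_cos_iff_arccos_eq_or {a t : ℝ} (ha : a ∈ Icc (-1) 1) (ht : t ∈ Icc 0 (2 * π)) :
    a = cos t ↔ arccos a = t ∨ arccos a + t = 2 * π := by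
  rcases le_or_gt t π with htπ | htπ
  · rw [eq_cos_iff_arccos_eq ha ⟨ht.1, htπ⟩]
    refine ⟨Or.inl, ?_⟩
    rintro (h | h)
    · exact h
    · linarith [arccos_le_pi a]
  · rw [← cos_two_pi_sub, eq_cos_iff_arccos_eq ha ⟨by linarith [ht.2], by linarith⟩]
    refine ⟨fun h ↦ Or.inr (by linarith), ?_⟩
    rintro (h | h)
    · linarith [arccos_le_pi a]
    · linarith

lemma unitGramDet_eq_neg_mul {b c : ℝ} (a : ℝ) (hb : b ∈ Icc (-1) 1) (hc : c ∈ Icc (-1) 1) :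
    unitGramDet a b c =
      -((a - cos (arccos b - arccos c)) * (a - cos (arccos b + arccos c))) := by
  have hsb : √(1 - b ^ 2) ^ 2 = 1 - b ^ 2 := sq_sqrt (by nlinarith [hb.1, hb.2])
  have hsc : √(1 - c ^ 2) ^ 2 = 1 - c ^ 2 := sq_sqrt (by nlinarith [hc.1, hc.2])
  rw [cos_sub, cos_add, cos_arccos hb.1 hb.2, cos_arccos hc.1 hc.2, sin_arccos, sin_arccos,
    unitGramDet]
  linear_combination -√(1 - c ^ 2) ^ 2 * hsb - (1 - b ^ 2) * hsc

lemma unitGramDet_eq_zero_iff {a b c : ℝ} (ha : a ∈ Icc (-1) 1) (hb : b ∈ Icc (-1) 1)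
    (hc : c ∈ Icc (-1) 1) :
    unitGramDet a b c = 0 ↔
      arccos a = |arccos b - arccos c| ∨ arccos a = arccos b + arccos c ∨
        arccos a + arccos b + arccos c = 2 * π := by
  have hβ := arccos_nonneg b
  have hβ' := arccos_le_pi b
  have hγ := arccos_nonneg c
  have hγ' := arccos_le_pi c
  rw [unitGramDet_eq_neg_mul a hb hc, neg_eq_zero, mul_eq_zero, sub_eq_zero, sub_eq_zero,
    ← cos_abs, eq_cos_iff_arccos_eq ha ⟨abs_nonneg _, abs_le.mpr ⟨by linarith, by linarith⟩⟩,
    eq_cos_iff_arccos_eq_or ha ⟨by linarith, by linarith⟩, add_assoc]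

lemma dotProduct_mem_Icc_of_S2 {x y : Fin 3 → ℝ} (hx : S2 x) (hy : S2 y) :
    x ⬝ᵥ y ∈ Icc (-1) 1 := by
  have h := Finset.sum_mul_sq_le_sq_mul_sq Finset.univ x y
  simp only [← sq, S2, dotProduct] at hx hy h
  rw [hx, hy, one_mul, sq_le_one_iff_abs_le_one, abs_le] at h
  exact h

lemma S2_inv_sqrt_smul {v : Fin 3 → ℝ} (hv : v ≠ 0) : S2 ((√(v ⬝ᵥ v))⁻¹ • v) := by
  have hpos : 0 < v ⬝ᵥ v := dotProduct_self_star_pos_iff.mpr hv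
  rw [S2, smul_dotProduct, dotProduct_smul, smul_eq_mul, smul_eq_mul, ← mul_assoc, ← mul_inv,
    mul_self_sqrt hpos.le, inv_mul_cancel₀ hpos.ne']

lemma exists_S2_orthogonal_iff_det_eq_zero (x y z : Fin 3 → ℝ) :
    (∃ u, S2 u ∧ u ⬝ᵥ x = 0 ∧ u ⬝ᵥ y = 0 ∧ u ⬝ᵥ z = 0) ↔ (of ![x, y, z]).det = 0 := by
  have hmulVec (v : Fin 3 → ℝ) :
      of ![x, y, z] *ᵥ v = 0 ↔ v ⬝ᵥ x = 0 ∧ v ⬝ᵥ y = 0 ∧ v ⬝ᵥ z = 0 := by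
    simp [funext_iff, Fin.forall_fin_succ, dotProduct_comm]
  simp_rw [← exists_mulVec_eq_zero_iff, hmulVec]
  constructor
  · rintro ⟨u, hu, horth⟩
    refine ⟨u, ?_, horth⟩
    rintro rfl
    simp [S2] at hu
  · rintro ⟨v, hv, hx, hy, hz⟩
    exact ⟨_, S2_inv_sqrt_smul hv, by simp only [smul_dotProduct, hx, hy, hz, smul_zero, and_self]⟩

lemma det_sq_eq_unitGramDet {x y z : Fin 3 → ℝ} (hx : S2 x) (hy : S2 y) (hz : S2 z) :
    (of ![x, y, z]).det ^ 2 = unitGramDet (x ⬝ᵥ y) (x ⬝ᵥ z) (y ⬝ᵥ z) := by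
  have hgram : of ![x, y, z] * (of ![x, y, z])ᵀ =
      !![x ⬝ᵥ x, x ⬝ᵥ y, x ⬝ᵥ z; y ⬝ᵥ x, y ⬝ᵥ y, y ⬝ᵥ z; z ⬝ᵥ x, z ⬝ᵥ y, z ⬝ᵥ z] := by
    ext i j
    fin_cases i <;> fin_cases j <;> rfl
  rw [S2] at hx hy hz
  rw [sq]
  nth_rw 2 [← det_transpose]
  rw [← det_mul, hgram, det_fin_three]
  simp only [of_apply, cons_val', cons_val_zero, cons_val_fin_one, cons_val_one, cons_val,
    hx, hy, hz, dotProduct_comm y x, dotProduct_comm z x, dotProduct_comm z y, unitGramDet]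
  ring

theorem stmt_3 (Γi Γj Γk : Fin 3 → ℝ) (hi : S2 Γi) (hj : S2 Γj) (hk : S2 Γk) :
    (∃ u : Fin 3 → ℝ, S2 u ∧ u ⬝ᵥ Γi = 0 ∧ u ⬝ᵥ Γj = 0 ∧ u ⬝ᵥ Γk = 0) ↔
      (geo Γi Γj = |geo Γi Γk - geo Γj Γk| ∨
        geo Γi Γj = geo Γi Γk + geo Γj Γk ∨
        geo Γi Γj + geo Γi Γk + geo Γj Γk = 2 * π) := by
  rw [exists_S2_orthogonal_iff_det_eq_zero, ← pow_eq_zero_iff two_ne_zero,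
    det_sq_eq_unitGramDet hi hj hk]
  exact unitGramDet_eq_zero_iff (dotProduct_mem_Icc_of_S2 hi hj) (dotProduct_mem_Icc_of_S2 hi hk)
    (dotProduct_mem_Icc_of_S2 hj hk)
end
end

section
/- Let n ≥ 3 be odd and Γ₁, …, Γₙ ∈ S² with cyclic indices. Then Σᵢ₌₁ⁿ arccos(Γᵢᵀ Γᵢ₊₁) ≤ (n−1)π, and consequently min_i arccos(Γᵢᵀ Γᵢ₊₁) ≤ π − π/n. -/
/-!
Replacing `Γᵢ` by `(-1)ⁱ Γᵢ` turns every edge length `θᵢ = arccos (Γᵢ ⬝ Γᵢ₊₁)` into `π - θᵢ` and,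
since `n` is odd, the closed polygon into a path from `Γ₀` to `-Γ₀`. By the triangle inequality
for angles this path is at least `π` long, so `π ≤ nπ - ∑ θᵢ`.
-/

open Matrix Real

noncomputable section

open InnerProductGeometry Finset

namespace InnerProductGeometry

variable {V : Type*} [NormedAddCommGroup V] [InnerProductSpace ℝ V]

theorem angle_le_range_sum_angle (u : ℕ → V) (h0 : u 0 ≠ 0) (n : ℕ) :
    angle (u 0) (u n) ≤ ∑ i ∈ range n, angle (u i) (u (i + 1)) := by
  induction n with
  | zero => simp [angle_self h0]
  | succ n ih =>
    rw [sum_range_succ]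
    linarith [angle_le_angle_add_angle (u 0) (u n) (u (n + 1))]

theorem angle_neg_one_pow_smul_succ (u : ℕ → V) (i : ℕ) :
    angle ((-1 : ℝ) ^ i • u i) ((-1 : ℝ) ^ (i + 1) • u (i + 1)) = π - angle (u i) (u (i + 1)) := by
  rw [pow_succ, mul_smul, neg_one_smul, angle_smul_smul (pow_ne_zero i (by norm_num)),
    angle_neg_right]

theorem range_sum_angle_le_of_odd {n : ℕ} (hodd : Odd n) (u : ℕ → V) (h0 : u 0 ≠ 0)
    (hper : u n = u 0) :
    ∑ i ∈ range n, angle (u i) (u (i + 1)) ≤ (n - 1) * π := by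
  have hpath := angle_le_range_sum_angle (fun i ↦ (-1 : ℝ) ^ i • u i) (by simpa using h0) n
  simp only [angle_neg_one_pow_smul_succ, pow_zero, one_smul, hodd.neg_one_pow, neg_one_smul,
    hper, angle_self_neg_of_nonzero h0, sum_sub_distrib, sum_const, card_range,
    nsmul_eq_mul] at hpath
  linarith

end InnerProductGeometry

theorem Finset.inf'_le_sum_div_card {ι : Type*} {s : Finset ι} (hs : s.Nonempty) (f : ι → ℝ) :
    s.inf' hs f ≤ (∑ i ∈ s, f i) / #s := by
  rw [le_div_iff₀ (by exact_mod_cast hs.card_pos), mul_comm, ← nsmul_eq_mul]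
  exact card_nsmul_le_sum s f _ fun i hi ↦ inf'_le f hi

theorem S2.norm_toLp {x : Fin 3 → ℝ} (hx : S2 x) : ‖WithLp.toLp 2 x‖ = 1 := by
  rw [← pow_eq_one_iff_of_nonneg (norm_nonneg _) two_ne_zero, ← real_inner_self_eq_norm_sq,
    EuclideanSpace.inner_toLp_toLp]
  exact hx

theorem geo_eq_angle {x y : Fin 3 → ℝ} (hx : S2 x) (hy : S2 y) :
    geo x y = angle (WithLp.toLp 2 x) (WithLp.toLp 2 y) := by
  rw [geo, angle, hx.norm_toLp, hy.norm_toLp, EuclideanSpace.inner_toLp_toLp, star_trivial,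
    dotProduct_comm, mul_one, div_one]

theorem stmt_5 (n : ℕ) (hn : 3 ≤ n) (hodd : Odd n) (Γ : ℕ → Fin 3 → ℝ)
    (hS : ∀ i, S2 (Γ i)) (hper : Γ n = Γ 0) :
    (∑ i ∈ Finset.range n, geo (Γ i) (Γ (i + 1))) ≤ ((n : ℝ) - 1) * π ∧
      (Finset.range n).inf' (Finset.nonempty_range_iff.mpr (by omega))
          (fun i => geo (Γ i) (Γ (i + 1))) ≤ π - π / n := by
  have hsum : ∑ i ∈ range n, geo (Γ i) (Γ (i + 1)) ≤ (n - 1) * π := by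
    simp only [geo_eq_angle (hS _) (hS _)]
    exact range_sum_angle_le_of_odd hodd (fun i ↦ WithLp.toLp 2 (Γ i))
      (norm_ne_zero_iff.mp (by simp [(hS 0).norm_toLp])) (by simp [hper])
  refine ⟨hsum, (inf'_le_sum_div_card _ _).trans ?_⟩
  have hn0 : (0 : ℝ) < n := by exact_mod_cast hodd.pos
  rw [card_range, div_le_iff₀ hn0, sub_mul, div_mul_cancel₀ _ hn0.ne']
  linarith
end
end
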